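/- arXiv:2103.07293 — 2 statements merged into one kernel-verified Lean document; each statement's English description precedes it below -/
import Mathlib

section
/- Let ω_1, ..., ω_M be vectors in ℝ^D with ‖ω_k‖ ≤ C for all k, and let x_1, ..., x_N ∈ ℝ^D with labels y_i ∈ {1,...,M}. Then the average softmax classification loss satisfies (1/N) Σ_{i=1}^N [-log(exp(⟨ω_{y_i}, x_i⟩) / Σ_{j=1}^M exp(⟨ω_j, x_i⟩))] ≥ log M - (C/(M·N)) Σ_{j=1}^M ‖(M-1) Σ_{i : y_i = j} x_i - Σ_{i : y_i ≠ j} x_i‖. -/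
/-!
For each sample, Jensen's inequality for `exp` bounds the log-partition function below by
`log M` plus the mean logit, so the loss of sample `i` is at least
`log M + (1/M) ∑ⱼ ⟪ωⱼ, xᵢ⟫ - ⟪ω_{yᵢ}, xᵢ⟫`. Regrouping the sum over samples by class, the total
of these bounds is `N log M - (1/M) ∑ⱼ ⟪ωⱼ, vⱼ⟫` with `vⱼ` the class contrast vector of the
statement, and Cauchy–Schwarz with `‖ωⱼ‖ ≤ C` finishes.
-/

open Finset Real
open scoped RealInnerProductSpace

section
variable {ι : Type*} [Fintype ι] [Nonempty ι]

theorem log_card_add_sum_div_card_le_log_sum_exp (b : ι → ℝ) :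
    log (Fintype.card ι) + (∑ i, b i) / Fintype.card ι ≤ log (∑ i, exp (b i)) := by
  have hcard : (0 : ℝ) < Fintype.card ι := by exact_mod_cast Fintype.card_pos
  have jensen := convexOn_exp.map_sum_le (t := univ) (w := fun _ => (Fintype.card ι : ℝ)⁻¹)
    (p := b) (fun _ _ => by positivity) (by simp [hcard.ne']) (fun _ _ => Set.mem_univ _)
  simp only [smul_eq_mul, ← mul_sum] at jensen
  rw [inv_mul_eq_div, inv_mul_eq_div] at jensen
  rw [← log_exp ((∑ i, b i) / _), ← log_mul hcard.ne' (exp_pos _).ne']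
  exact log_le_log (by positivity) ((le_div_iff₀' hcard).mp jensen)

theorem log_card_add_sum_div_card_sub_le_neg_log_exp_div_sum_exp (b : ι → ℝ) (k : ι) :
    log (Fintype.card ι) + (∑ i, b i) / Fintype.card ι - b k ≤
      -log (exp (b k) / ∑ i, exp (b i)) := by
  have hpos : 0 < ∑ i, exp (b i) := sum_pos (fun i _ => exp_pos _) univ_nonempty
  rw [log_div (exp_pos _).ne' hpos.ne', log_exp, neg_sub]
  linarith [log_card_add_sum_div_card_le_log_sum_exp b]

end

section
variable {E ι κ : Type*} [NormedAddCommGroup E] [InnerProductSpace ℝ E] [Fintype ι] [Fintype κ]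
  [DecidableEq κ]

noncomputable def classContrast (x : ι → E) (y : ι → κ) (j : κ) : E :=
  ((Fintype.card κ : ℝ) - 1) • ∑ i with y i = j, x i - ∑ i with y i ≠ j, x i

theorem classContrast_eq (x : ι → E) (y : ι → κ) (j : κ) :
    classContrast x y j = (Fintype.card κ : ℝ) • ∑ i with y i = j, x i - ∑ i, x i := by
  rw [classContrast, ← sum_filter_add_sum_filter_not univ (fun i => y i = j), sub_smul, one_smul]
  abel

theorem sum_inner_classContrast (ω : κ → E) (x : ι → E) (y : ι → κ) :
    ∑ j, ⟪ω j, classContrast x y j⟫ =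
      Fintype.card κ * ∑ i, ⟪ω (y i), x i⟫ - ∑ i, ∑ j, ⟪ω j, x i⟫ := by
  simp only [classContrast_eq, inner_sub_right, inner_smul_right, inner_sum, sum_sub_distrib,
    ← mul_sum]
  rw [sum_comm (f := fun j i => ⟪ω j, x i⟫), ← sum_fiberwise univ y (fun i => ⟪ω (y i), x i⟫)]
  congr 2
  exact sum_congr rfl fun j _ => sum_congr rfl fun i hi => by rw [(mem_filter.1 hi).2]

end

theorem avg_softmax_loss_lower_bound_general (D M N : ℕ) (hM : 1 ≤ M) (hN : 1 ≤ N)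
    (C : ℝ)
    (ω : Fin M → EuclideanSpace ℝ (Fin D)) (hω : ∀ k, ‖ω k‖ ≤ C)
    (x : Fin N → EuclideanSpace ℝ (Fin D)) (y : Fin N → Fin M) :
    (1 / N) * ∑ i, -Real.log (Real.exp (inner ℝ (ω (y i)) (x i) : ℝ) /
        ∑ j, Real.exp (inner ℝ (ω j) (x i) : ℝ)) ≥
      Real.log M - (C / (M * N)) *
        ∑ j, ‖((M : ℝ) - 1) • (∑ i ∈ Finset.univ.filter (fun i => y i = j), x i) -
          ∑ i ∈ Finset.univ.filter (fun i => y i ≠ j), x i‖ := by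
  have : Nonempty (Fin M) := ⟨⟨0, hM⟩⟩
  have hM' : (0 : ℝ) < M := by exact_mod_cast hM
  have hN' : (0 : ℝ) < N := by exact_mod_cast hN
  have per_sample (i : Fin N) :=
    log_card_add_sum_div_card_sub_le_neg_log_exp_div_sum_exp (fun j => ⟪ω j, x i⟫) (y i)
  have identity := sum_inner_classContrast ω x y
  have cauchy_schwarz : ∑ j, ⟪ω j, classContrast x y j⟫ ≤ C * ∑ j, ‖classContrast x y j‖ := by
    rw [mul_sum]
    exact sum_le_sum fun j _ => (real_inner_le_norm _ _).trans
      (mul_le_mul_of_nonneg_right (hω j) (norm_nonneg _))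
  have contrast (j : Fin M) : ((M : ℝ) - 1) • (∑ i ∈ Finset.univ.filter (fun i => y i = j), x i) -
      ∑ i ∈ Finset.univ.filter (fun i => y i ≠ j), x i = classContrast x y j := by
    simp [classContrast]
  simp only [Fintype.card_fin] at per_sample identity
  simp only [contrast, ge_iff_le]
  calc _ ≤ log M - (∑ j, ⟪ω j, classContrast x y j⟫) / (M * N) := by
        rw [div_mul_eq_mul_div]; gcongr
    _ = 1 / N * ∑ i, (log M + (∑ j, ⟪ω j, x i⟫) / M - ⟪ω (y i), x i⟫) := by
        rw [identity, sum_sub_distrib, sum_add_distrib, ← sum_div, sum_const, card_univ,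
          Fintype.card_fin, nsmul_eq_mul]
        field_simp
        ring
    _ ≤ _ := by gcongr with i; exact per_sample i

theorem avg_softmax_loss_lower_bound (D M N : ℕ) (hD : 1 ≤ D) (hM : 1 ≤ M) (hN : 1 ≤ N)
    (C : ℝ) (hC : 0 ≤ C)
    (ω : Fin M → EuclideanSpace ℝ (Fin D)) (hω : ∀ k, ‖ω k‖ ≤ C)
    (x : Fin N → EuclideanSpace ℝ (Fin D)) (y : Fin N → Fin M) :
    (1 / N) * ∑ i, -Real.log (Real.exp (inner ℝ (ω (y i)) (x i) : ℝ) /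
        ∑ j, Real.exp (inner ℝ (ω j) (x i) : ℝ)) ≥
      Real.log M - (C / (M * N)) *
        ∑ j, ‖((M : ℝ) - 1) • (∑ i ∈ Finset.univ.filter (fun i => y i = j), x i) -
          ∑ i ∈ Finset.univ.filter (fun i => y i ≠ j), x i‖ :=
  avg_softmax_loss_lower_bound_general D M N hM hN C ω hω x y
end

section
/- Under the same setup with two sets of embeddings x_i and v_i in ℝ^D sharing labels y_i, and classifier weights ω_k with ‖ω_k‖ ≤ C, the combined loss L_face + L_voice, where L_face = (1/N) Σ_i [-log(exp(⟨ω_{y_i}, x_i⟩)/Σ_j exp(⟨ω_j, x_i⟩))] and similarly for L_voice with v_i, satisfies L_face + L_voice ≥ 2 log M - (C/(M·N)) Σ_{j=1}^M ‖(M-1) Σ_{i : y_i = j} (x_i + v_i) - Σ_{i : y_i ≠ j} (x_i + v_i)‖. -/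
/-!
Log-sum-exp dominates `log M` plus the mean of its arguments (concavity of `log`), so each
cross-entropy term is at least `log M + mean_j ⟪ω_j, z_i⟫ - ⟪ω_{y_i}, z_i⟫`. Summed over the
samples and regrouped by class, the logits collapse to `Σ_j ⟪ω_j, M Σ_{y_i = j} z_i - Σ_i z_i⟫`;
adding the two modalities and applying Cauchy–Schwarz with `‖ω_j‖ ≤ C` gives the bound.
-/

open Finset
open scoped InnerProductSpace

theorem log_card_add_mean_le_log_sum_exp {ι : Type*} [Fintype ι] [Nonempty ι] (a : ι → ℝ) :
    Real.log (Fintype.card ι) + (Fintype.card ι : ℝ)⁻¹ * ∑ j, a j ≤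
      Real.log (∑ j, Real.exp (a j)) := by
  have hn : (0 : ℝ) < Fintype.card ι := by exact_mod_cast Fintype.card_pos
  have jensen := strictConcaveOn_log_Ioi.concaveOn.le_map_sum (t := univ)
    (w := fun _ => (Fintype.card ι : ℝ)⁻¹) (p := fun j => Real.exp (a j))
    (fun _ _ => by positivity) (by simp [hn.ne'])
    (fun j _ => Real.exp_pos (a j))
  simp only [smul_eq_mul, Real.log_exp, ← mul_sum] at jensen
  rw [Real.log_mul (by positivity) (by positivity), Real.log_inv] at jensen
  linarith

theorem neg_log_exp_div_sum_exp {ι : Type*} [Fintype ι] (a : ι → ℝ) (k : ι) :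
    -Real.log (Real.exp (a k) / ∑ j, Real.exp (a j)) = Real.log (∑ j, Real.exp (a j)) - a k := by
  have hsum : 0 < ∑ j, Real.exp (a j) :=
    sum_pos (fun j _ => Real.exp_pos (a j)) ⟨k, mem_univ k⟩
  rw [Real.log_div (Real.exp_pos _).ne' hsum.ne', Real.log_exp, neg_sub]

section

variable {E : Type*} [NormedAddCommGroup E] [InnerProductSpace ℝ E] {ι κ : Type*}

theorem smul_sum_filter_sub_sum (s : Finset ι) (p : ι → Prop) [DecidablePred p] (w : ι → E)
    (c : ℝ) :
    c • ∑ i ∈ s.filter p, w i - ∑ i ∈ s, w i =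
      (c - 1) • ∑ i ∈ s.filter p, w i - ∑ i ∈ s.filter (fun i => ¬p i), w i := by
  rw [← sum_filter_add_sum_filter_not s p]
  module

variable [Fintype ι] [Fintype κ] [DecidableEq κ]

theorem sum_inner_smul_sum_fiber_sub_sum (ω : κ → E) (z : ι → E) (y : ι → κ) (c : ℝ) :
    ∑ j, ⟪ω j, c • ∑ i ∈ univ.filter (fun i => y i = j), z i - ∑ i, z i⟫_ℝ =
      c * ∑ i, ⟪ω (y i), z i⟫_ℝ - ∑ i, ∑ j, ⟪ω j, z i⟫_ℝ := by
  have fiberwise :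
      ∑ i, ⟪ω (y i), z i⟫_ℝ = ∑ j, ⟪ω j, ∑ i ∈ univ.filter (fun i => y i = j), z i⟫_ℝ := by
    rw [← sum_fiberwise univ y]
    refine sum_congr rfl fun j _ => ?_
    rw [inner_sum]
    exact sum_congr rfl fun i hi => by rw [(mem_filter.mp hi).2]
  simp only [inner_sub_right, inner_smul_right, sum_sub_distrib, fiberwise, mul_sum, inner_sum]
  rw [sum_comm (s := univ) (t := univ) (f := fun i j => ⟪ω j, z i⟫_ℝ)]

theorem log_card_sub_le_mean_cross_entropy [Nonempty ι] (ω : κ → E) (z : ι → E) (y : ι → κ) :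
    Real.log (Fintype.card κ) - 1 / (Fintype.card κ * Fintype.card ι) *
        ∑ j, ⟪ω j, (Fintype.card κ : ℝ) • ∑ i ∈ univ.filter (fun i => y i = j), z i - ∑ i, z i⟫_ℝ ≤
      1 / Fintype.card ι * ∑ i, -Real.log (Real.exp ⟪ω (y i), z i⟫_ℝ /
        ∑ j, Real.exp ⟪ω j, z i⟫_ℝ) := by
  have : Nonempty κ := ⟨y (Classical.arbitrary ι)⟩
  have per_sample : ∀ i, Real.log (Fintype.card κ) + (Fintype.card κ : ℝ)⁻¹ * ∑ j, ⟪ω j, z i⟫_ℝ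
      - ⟪ω (y i), z i⟫_ℝ ≤ -Real.log (Real.exp ⟪ω (y i), z i⟫_ℝ / ∑ j, Real.exp ⟪ω j, z i⟫_ℝ) :=
    fun i => by
      rw [neg_log_exp_div_sum_exp (fun j => ⟪ω j, z i⟫_ℝ)]
      linarith [log_card_add_mean_le_log_sum_exp (fun j => ⟪ω j, z i⟫_ℝ)]
  have summed := sum_le_sum fun i (_ : i ∈ univ) => per_sample i
  rw [sum_sub_distrib, sum_add_distrib, sum_const, card_univ, nsmul_eq_mul, ← mul_sum] at summed
  rw [sum_inner_smul_sum_fiber_sub_sum]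
  calc _ = 1 / Fintype.card ι * (Fintype.card ι * Real.log (Fintype.card κ) +
        (Fintype.card κ : ℝ)⁻¹ * ∑ i, ∑ j, ⟪ω j, z i⟫_ℝ - ∑ i, ⟪ω (y i), z i⟫_ℝ) := by
        field_simp; ring
    _ ≤ _ := by gcongr

end

theorem implicit_alignment_lower_bound_general (D M N : ℕ) (hN : 1 ≤ N)
    (C : ℝ)
    (ω : Fin M → EuclideanSpace ℝ (Fin D)) (hω : ∀ k, ‖ω k‖ ≤ C)
    (x v : Fin N → EuclideanSpace ℝ (Fin D)) (y : Fin N → Fin M) :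
    ((1 / N) * ∑ i, -Real.log (Real.exp (inner ℝ (ω (y i)) (x i) : ℝ) /
        ∑ j, Real.exp (inner ℝ (ω j) (x i) : ℝ))) +
    ((1 / N) * ∑ i, -Real.log (Real.exp (inner ℝ (ω (y i)) (v i) : ℝ) /
        ∑ j, Real.exp (inner ℝ (ω j) (v i) : ℝ))) ≥
      2 * Real.log M - (C / (M * N)) *
        ∑ j, ‖((M : ℝ) - 1) • (∑ i ∈ Finset.univ.filter (fun i => y i = j), (x i + v i)) -
          ∑ i ∈ Finset.univ.filter (fun i => y i ≠ j), (x i + v i)‖ := by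
  have : Nonempty (Fin N) := ⟨⟨0, hN⟩⟩
  have hx := log_card_sub_le_mean_cross_entropy ω x y
  have hv := log_card_sub_le_mean_cross_entropy ω v y
  simp only [Fintype.card_fin] at hx hv
  have alignment := sum_le_sum fun j (_ : j ∈ univ) =>
    calc ⟪ω j, (M : ℝ) • ∑ i ∈ univ.filter (fun i => y i = j), x i - ∑ i, x i⟫_ℝ +
          ⟪ω j, (M : ℝ) • ∑ i ∈ univ.filter (fun i => y i = j), v i - ∑ i, v i⟫_ℝ
        = ⟪ω j, ((M : ℝ) - 1) • (∑ i ∈ univ.filter (fun i => y i = j), (x i + v i)) -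
          ∑ i ∈ univ.filter (fun i => y i ≠ j), (x i + v i)⟫_ℝ := by
          rw [← inner_add_right, ← smul_sum_filter_sub_sum, sum_add_distrib, sum_add_distrib,
            smul_add]
          abel_nf
      _ ≤ C * ‖((M : ℝ) - 1) • (∑ i ∈ univ.filter (fun i => y i = j), (x i + v i)) -
          ∑ i ∈ univ.filter (fun i => y i ≠ j), (x i + v i)‖ :=
        (real_inner_le_norm _ _).trans (mul_le_mul_of_nonneg_right (hω j) (norm_nonneg _))
  rw [sum_add_distrib, ← mul_sum] at alignment
  have scaled := mul_le_mul_of_nonneg_left alignment (by positivity : (0 : ℝ) ≤ 1 / (M * N))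
  rw [← mul_assoc, one_div_mul_eq_div (M * N : ℝ) C] at scaled
  linarith

theorem implicit_alignment_lower_bound (D M N : ℕ) (hD : 1 ≤ D) (hM : 1 ≤ M) (hN : 1 ≤ N)
    (C : ℝ) (hC : 0 ≤ C)
    (ω : Fin M → EuclideanSpace ℝ (Fin D)) (hω : ∀ k, ‖ω k‖ ≤ C)
    (x v : Fin N → EuclideanSpace ℝ (Fin D)) (y : Fin N → Fin M) :
    ((1 / N) * ∑ i, -Real.log (Real.exp (inner ℝ (ω (y i)) (x i) : ℝ) /
        ∑ j, Real.exp (inner ℝ (ω j) (x i) : ℝ))) +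
    ((1 / N) * ∑ i, -Real.log (Real.exp (inner ℝ (ω (y i)) (v i) : ℝ) /
        ∑ j, Real.exp (inner ℝ (ω j) (v i) : ℝ))) ≥
      2 * Real.log M - (C / (M * N)) *
        ∑ j, ‖((M : ℝ) - 1) • (∑ i ∈ Finset.univ.filter (fun i => y i = j), (x i + v i)) -
          ∑ i ∈ Finset.univ.filter (fun i => y i ≠ j), (x i + v i)‖ :=
  implicit_alignment_lower_bound_general D M N hN C ω hω x v y
end
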